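/- arXiv:1007.3401 — 2 statements merged into one kernel-verified Lean document; each statement's English description precedes it below -/
import Mathlib

section
/- Let β > 0, ν > 0 and let γ = (γ_n)_{n≥1} be a non-zero stationary solution of the viscous dyadic model, and let n₀ be the first index such that γ_{n₀} ≠ 0. Then γ_n < 0 for all n > n₀. -/
/-- The dyadic frequencies: `λ_0 = 0`, `λ_n = 2^n` for `n ≥ 1`. -/
noncomputable def lam (n : ℕ) : ℝ := if n = 0 then 0 else 2 ^ n

/-- `g` is a stationary solution of the viscous dyadic model with parameter `β`
and viscosity `ν` (the convention `λ_0 = 0` kills the last term for `n = 1`). -/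
def IsStationarySolution (β ν : ℝ) (g : ℕ → ℝ) : Prop :=
  ∀ n, 1 ≤ n →
    ν * lam n ^ 2 * g n + lam n ^ β * g n * g (n + 1)
      - lam (n - 1) ^ β * g (n - 1) ^ 2 = 0

lemma lam_pos {n : ℕ} (hn : 1 ≤ n) : 0 < lam n := by
  simp only [lam, if_neg (Nat.one_le_iff_ne_zero.mp hn)]
  positivity

/-- if `n₀` is the first index at which a non-zero stationary solution
does not vanish, then `γ_n < 0` for all `n > n₀`. -/
theorem stationary_negative_above
    (β ν : ℝ) (hβ : 0 < β) (hν : 0 < ν)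
    (g : ℕ → ℝ) (hg : IsStationarySolution β ν g)
    (n₀ : ℕ) (hn₀ : 1 ≤ n₀) (hne : g n₀ ≠ 0)
    (hfirst : ∀ n, 1 ≤ n → n < n₀ → g n = 0) :
    ∀ n, n₀ < n → g n < 0 := by
  -- step lemma
  have step : ∀ n, 1 ≤ n → g n < 0 → g (n + 1) < 0 := by
    intro n hn hneg
    have heq := hg n hn
    have hl : 0 < lam n := lam_pos hn
    have hrp : (0:ℝ) < lam n ^ β := Real.rpow_pos_of_pos hl β
    have hsq : (0:ℝ) < lam n ^ 2 := by positivity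
    have hnn : (0:ℝ) ≤ lam (n-1) ^ β * g (n-1) ^ 2 := by
      have : (0:ℝ) ≤ lam (n-1) := by
        rcases Nat.eq_zero_or_pos (n-1) with h | h
        · simp [lam, h]
        · exact (lam_pos h).le
      positivity
    by_contra h
    push_neg at h
    nlinarith [mul_pos (mul_pos hν hsq) (neg_pos.mpr hneg),
      mul_nonneg (mul_pos hrp (neg_pos.mpr hneg)).le h]
  -- base: g (n₀ + 1) < 0
  have hprev : lam (n₀ - 1) ^ β * g (n₀ - 1) ^ 2 = 0 := by
    rcases eq_or_lt_of_le hn₀ with h | h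
    · have : lam (n₀ - 1) = 0 := by simp [lam, ← h]
      rw [this, Real.zero_rpow hβ.ne', zero_mul]
    · have hg0 : g (n₀ - 1) = 0 :=
        hfirst (n₀ - 1) (by omega) (by omega)
      rw [hg0]; ring
  have hbase : g (n₀ + 1) < 0 := by
    have heq := hg n₀ hn₀
    rw [hprev] at heq
    have hl : 0 < lam n₀ := lam_pos hn₀
    have hrp : (0:ℝ) < lam n₀ ^ β := Real.rpow_pos_of_pos hl β
    have hsq : (0:ℝ) < lam n₀ ^ 2 := by positivity
    have hfac : ν * lam n₀ ^ 2 + lam n₀ ^ β * g (n₀ + 1) = 0 := by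
      have : g n₀ * (ν * lam n₀ ^ 2 + lam n₀ ^ β * g (n₀ + 1)) = 0 := by
        nlinarith [heq]
      rcases mul_eq_zero.mp this with h | h
      · exact absurd h hne
      · exact h
    nlinarith [mul_pos hν hsq]
  -- induction
  intro n hn
  obtain ⟨k, rfl⟩ : ∃ k, n = n₀ + 1 + k := ⟨n - (n₀ + 1), by omega⟩
  clear hn
  induction k with
  | zero => exact hbase
  | succ k ih =>
    exact step (n₀ + 1 + k) (by omega) ih
end

section
/- Let β > 0, T > 0, ε > 0, and let X = (X_n)_{n≥1} be a weak solution of the inviscid dyadic model on [0,T] with X_n(t) ≥ 0 for all n and t, such that sup_{t∈[0,T]} sup_{n≥1} (λ_n^{(β-1)/3 + ε} X_n(t)) < ∞. Then X is the unique solution with initial condition (X_n(0))_{n≥1} in the class of solutions satisfying the same bound: any weak solution Y on [0,T] with the same initial condition and with sup_{t∈[0,T]} sup_{n≥1} (λ_n^{(β-1)/3 + ε} |Y_n(t)|) < ∞ coincides with X. -/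
/-- `X` is a weak solution of the inviscid dyadic model with parameter `β` on `I`. -/
def IsInviscidSolution (β : ℝ) (I : Set ℝ) (X : ℕ → ℝ → ℝ) : Prop :=
  ∀ n, 1 ≤ n → ∀ t ∈ I, HasDerivWithinAt (X n)
    (lam (n - 1) ^ β * (X (n - 1) t) ^ 2 - lam n ^ β * X n t * X (n + 1) t) I t

/-!
Let `D = Y - X`. With the weights `λ_n⁻¹`, the energy `E_N = ∑_{n ≤ N} λ_n⁻¹ D_n²` of the
difference satisfies a balance in which the exchange terms between shells `n` and `n + 1`
combine into `-λ_n^{β-1} D_n² (X_{n+1} + Y_{n+1}) ≤ 0` (here it matters that `Y` stays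
nonnegative, which follows from `Y(0) = X(0) ≥ 0` by an integrating factor). Only the flux
through shell `N` survives, and the decay assumption makes it `O(λ_N^{-3ε})`. Hence
`E_N(t) = O(t λ_N^{-3ε}) → 0` and every `D_n` vanishes.
-/

open Set Filter Topology

lemma lam_zero_rpow {β : ℝ} (hβ : β ≠ 0) : lam 0 ^ β = 0 := by
  simp [lam, Real.zero_rpow hβ]

lemma lam_nonneg (n : ℕ) : 0 ≤ lam n := by
  unfold lam; split <;> positivity

lemma lam_succ {n : ℕ} (hn : 1 ≤ n) : lam (n + 1) = 2 * lam n := by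
  simp [lam, if_neg (by omega : n ≠ 0), pow_succ, mul_comm]

lemma lam_rpow {n : ℕ} (hn : 1 ≤ n) (s : ℝ) : lam n ^ s = (2 ^ s) ^ n := by
  rw [lam, if_neg (by omega), ← Real.rpow_natCast_mul zero_le_two, mul_comm,
    Real.rpow_mul_natCast zero_le_two]

lemma lam_inv {n : ℕ} (hn : 1 ≤ n) : (lam n)⁻¹ = 2⁻¹ ^ n := by
  rw [lam, if_neg (by omega), inv_pow]

section Calculus

variable {a b : ℝ} {f f' : ℝ → ℝ}

lemma monotoneOn_Icc_of_hasDerivWithinAt_nonneg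
    (hf : ∀ t ∈ Icc a b, HasDerivWithinAt f (f' t) (Icc a b) t)
    (hf' : ∀ t ∈ Icc a b, 0 ≤ f' t) : MonotoneOn f (Icc a b) :=
  monotoneOn_of_hasDerivWithinAt_nonneg (convex_Icc a b)
    (fun t ht => (hf t ht).continuousWithinAt)
    (fun t ht => (hf t (interior_subset ht)).mono interior_subset)
    (fun t ht => hf' t (interior_subset ht))

lemma nonneg_of_hasDerivWithinAt_eq_sub_mul {c g : ℝ → ℝ} (hc : ContinuousOn c (Icc a b))
    (hf : ∀ t ∈ Icc a b, HasDerivWithinAt f (g t - c t * f t) (Icc a b) t)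
    (hg : ∀ t ∈ Icc a b, 0 ≤ g t) (ha : 0 ≤ f a) : ∀ t ∈ Icc a b, 0 ≤ f t := by
  intro t ht
  have hab : a ≤ b := ht.1.trans ht.2
  -- `C` is a primitive of `c` on `[a, b]`, and `exp C` an integrating factor
  set c' : ℝ → ℝ := fun u => c (projIcc a b hab u)
  have hc' : Continuous c' := hc.comp_continuous (continuous_subtype_val.comp continuous_projIcc)
    (fun u => Subtype.mem _)
  set C : ℝ → ℝ := fun u => ∫ s in a..u, c' s
  have hC : ∀ u ∈ Icc a b, HasDerivAt C (c u) u := fun u hu => by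
    simpa [c', projIcc_of_mem hab hu] using (hc'.integral_hasStrictDerivAt a u).hasDerivAt
  have hmono : MonotoneOn (fun u => f u * Real.exp (C u)) (Icc a b) := by
    refine monotoneOn_Icc_of_hasDerivWithinAt_nonneg (f' := fun u => g u * Real.exp (C u))
      (fun u hu => ?_) (fun u hu => mul_nonneg (hg u hu) (Real.exp_nonneg _))
    exact ((hf u hu).fun_mul (hC u hu).exp.hasDerivWithinAt).congr_deriv (by ring)
  have := hmono (left_mem_Icc.2 hab) ht ht.1
  have ha' : 0 ≤ f a * Real.exp (C a) := mul_nonneg ha (Real.exp_nonneg _)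
  exact nonneg_of_mul_nonneg_left (ha'.trans this) (Real.exp_pos _)

lemma le_mul_sub_of_hasDerivWithinAt_le {L : ℝ}
    (hf : ∀ t ∈ Icc a b, HasDerivWithinAt f (f' t) (Icc a b) t)
    (hf' : ∀ t ∈ Icc a b, f' t ≤ L) : ∀ t ∈ Icc a b, f t ≤ f a + L * (t - a) := by
  intro t ht
  have hmono : MonotoneOn (fun u => L * u - f u) (Icc a b) :=
    monotoneOn_Icc_of_hasDerivWithinAt_nonneg (f' := fun u => L - f' u)
      (fun u hu => ((hasDerivAt_id u).const_mul L).hasDerivWithinAt.sub (hf u hu)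
        |>.congr_deriv (by ring))
      (fun u hu => sub_nonneg.2 (hf' u hu))
  have := hmono (left_mem_Icc.2 (ht.1.trans ht.2)) ht ht.1
  simp only at this
  linarith

end Calculus

lemma IsInviscidSolution.nonneg {β a b : ℝ} {Y : ℕ → ℝ → ℝ}
    (hY : IsInviscidSolution β (Icc a b) Y) (h0 : ∀ n, 1 ≤ n → 0 ≤ Y n a) :
    ∀ n, 1 ≤ n → ∀ t ∈ Icc a b, 0 ≤ Y n t := fun n hn =>
  nonneg_of_hasDerivWithinAt_eq_sub_mul (c := fun t => lam n ^ β * Y (n + 1) t)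
    (g := fun t => lam (n - 1) ^ β * Y (n - 1) t ^ 2)
    (continuousOn_const.mul fun t ht => (hY (n + 1) (by omega) t ht).continuousWithinAt)
    (fun t ht => (hY n hn t ht).congr_deriv (by ring))
    (fun _ _ => mul_nonneg (Real.rpow_nonneg (lam_nonneg _) _) (sq_nonneg _)) (h0 n hn)

section Energy

variable {β : ℝ}

noncomputable def dyadicField (β : ℝ) (x : ℕ → ℝ) (n : ℕ) : ℝ :=
  lam (n - 1) ^ β * x (n - 1) ^ 2 - lam n ^ β * x n * x (n + 1)

noncomputable def diffEnergy (X Y : ℕ → ℝ → ℝ) (N : ℕ) (t : ℝ) : ℝ :=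
  ∑ n ∈ Finset.Icc 1 N, (lam n)⁻¹ * (Y n t - X n t) ^ 2

noncomputable def diffEnergyRate (β : ℝ) (x y : ℕ → ℝ) (N : ℕ) : ℝ :=
  ∑ n ∈ Finset.Icc 1 N, 2 * (lam n)⁻¹ * (y n - x n) * (dyadicField β y n - dyadicField β x n)

/-- The flux of the energy of `y - x` from the shells `n ≤ N` into the shell `N + 1`. -/
noncomputable def diffFlux (β : ℝ) (x y : ℕ → ℝ) (N : ℕ) : ℝ :=
  2 * (lam N)⁻¹ * lam N ^ β * (y N - x N) * (y N * y (N + 1) - x N * x (N + 1))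

lemma hasDerivWithinAt_diffEnergy {I : Set ℝ} {X Y : ℕ → ℝ → ℝ}
    (hX : IsInviscidSolution β I X) (hY : IsInviscidSolution β I Y) (N : ℕ) {t : ℝ}
    (ht : t ∈ I) :
    HasDerivWithinAt (diffEnergy X Y N) (diffEnergyRate β (X · t) (Y · t) N) I t := by
  refine HasDerivWithinAt.fun_sum fun n hn => ?_
  have hn : 1 ≤ n := (Finset.mem_Icc.1 hn).1
  exact (((hY n hn t ht).sub (hX n hn t ht)).pow 2).const_mul _ |>.congr_deriv
    (by simp only [dyadicField, Pi.sub_apply]; ring)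

lemma diffEnergyRate_add_diffFlux_succ {x y : ℕ → ℝ} {N : ℕ} (hN : 1 ≤ N) :
    diffEnergyRate β x y (N + 1) + diffFlux β x y (N + 1) =
      diffEnergyRate β x y N + diffFlux β x y N -
        (lam N)⁻¹ * lam N ^ β * (y N - x N) ^ 2 * (x (N + 1) + y (N + 1)) := by
  rw [diffEnergyRate, diffEnergyRate, Finset.sum_Icc_succ_top (by omega)]
  simp only [diffFlux, dyadicField, Nat.add_sub_cancel, lam_succ hN]
  ring

/-- The weights `λ_n⁻¹` make the exchange between consecutive shells dissipative. -/
lemma diffEnergyRate_le_neg_diffFlux (hβ : β ≠ 0) {x y : ℕ → ℝ}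
    (hx : ∀ n, 1 ≤ n → 0 ≤ x n) (hy : ∀ n, 1 ≤ n → 0 ≤ y n) {N : ℕ} (hN : 1 ≤ N) :
    diffEnergyRate β x y N ≤ -diffFlux β x y N := by
  induction N, hN using Nat.le_induction with
  | base =>
    simp only [diffEnergyRate, diffFlux, dyadicField, Finset.Icc_self, Finset.sum_singleton,
      Nat.sub_self, lam_zero_rpow hβ]
    exact le_of_eq (by ring)
  | succ N hN ih =>
    have hdiss : 0 ≤ (lam N)⁻¹ * lam N ^ β * (y N - x N) ^ 2 * (x (N + 1) + y (N + 1)) := by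
      have := lam_nonneg N
      have := hx (N + 1) (by omega)
      have := hy (N + 1) (by omega)
      positivity
    linarith [diffEnergyRate_add_diffFlux_succ (β := β) (x := x) (y := y) hN]

lemma neg_diffFlux_le {q C : ℝ} (hq : 0 < q) {x y : ℕ → ℝ}
    (hx : ∀ n, 1 ≤ n → 0 ≤ x n) (hy : ∀ n, 1 ≤ n → 0 ≤ y n)
    (hxC : ∀ n, 1 ≤ n → q ^ n * x n ≤ C) (hyC : ∀ n, 1 ≤ n → q ^ n * y n ≤ C)
    {N : ℕ} (hN : 1 ≤ N) :
    -diffFlux β x y N ≤ 2 * C ^ 3 / q * (2 ^ β / (2 * q ^ 3)) ^ N := by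
  have hx' : ∀ n, 1 ≤ n → x n ≤ C / q ^ n := fun n hn =>
    (le_div_iff₀' (pow_pos hq n)).2 (hxC n hn)
  have hD : ∀ n, 1 ≤ n → |y n - x n| ≤ C / q ^ n := fun n hn =>
    abs_sub_le_of_nonneg_of_le (hy n hn) ((le_div_iff₀' (pow_pos hq n)).2 (hyC n hn))
      (hx n hn) (hx' n hn)
  set c := 2 * (lam N)⁻¹ * lam N ^ β
  have hc : 0 ≤ c := by have := lam_nonneg N; positivity
  calc -diffFlux β x y N
      = -(c * (y N - x N) ^ 2 * y (N + 1)) - c * x N * ((y N - x N) * (y (N + 1) - x (N + 1))) := by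
        simp only [diffFlux, c]; ring
    _ ≤ c * x N * (|y N - x N| * |y (N + 1) - x (N + 1)|) := by
        have := hy (N + 1) (by omega)
        have := hx N hN
        have : -((y N - x N) * (y (N + 1) - x (N + 1))) ≤ |y N - x N| * |y (N + 1) - x (N + 1)| := by
          rw [← abs_mul]; exact neg_le_abs _
        nlinarith [mul_nonneg hc (sq_nonneg (y N - x N)), mul_nonneg hc (hx N hN)]
    _ ≤ c * (C / q ^ N) * (C / q ^ N * (C / q ^ (N + 1))) := by
        have hC : 0 ≤ C / q ^ N := (hx N hN).trans (hx' N hN)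
        gcongr
        · exact hx' N hN
        · exact hD N hN
        · exact hD (N + 1) (by omega)
    _ = 2 * C ^ 3 / q * (2 ^ β / (2 * q ^ 3)) ^ N := by
        simp only [c, lam_inv hN, lam_rpow hN, div_pow, mul_pow, pow_succ, inv_pow]
        field_simp
        ring

lemma diffEnergy_le {a b L : ℝ} (hβ : β ≠ 0) {X Y : ℕ → ℝ → ℝ}
    (hX : IsInviscidSolution β (Icc a b) X) (hY : IsInviscidSolution β (Icc a b) Y)
    (hXnn : ∀ n, 1 ≤ n → ∀ t ∈ Icc a b, 0 ≤ X n t)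
    (hYnn : ∀ n, 1 ≤ n → ∀ t ∈ Icc a b, 0 ≤ Y n t)
    (h0 : ∀ n, 1 ≤ n → Y n a = X n a) {N : ℕ} (hN : 1 ≤ N)
    (hflux : ∀ t ∈ Icc a b, -diffFlux β (X · t) (Y · t) N ≤ L) :
    ∀ t ∈ Icc a b, diffEnergy X Y N t ≤ L * (t - a) := by
  have hE0 : diffEnergy X Y N a = 0 :=
    Finset.sum_eq_zero fun n hn => by simp [h0 n (Finset.mem_Icc.1 hn).1]
  intro t ht
  simpa [hE0] using le_mul_sub_of_hasDerivWithinAt_le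
    (fun s hs => hasDerivWithinAt_diffEnergy hX hY N hs)
    (fun s hs => (diffEnergyRate_le_neg_diffFlux hβ (fun n hn => hXnn n hn s hs)
      (fun n hn => hYnn n hn s hs) hN).trans (hflux s hs)) t ht

lemma inv_lam_mul_sq_le_diffEnergy (X Y : ℕ → ℝ → ℝ) {m N : ℕ} (hm : 1 ≤ m) (hmN : m ≤ N)
    (t : ℝ) : (lam m)⁻¹ * (Y m t - X m t) ^ 2 ≤ diffEnergy X Y N t :=
  Finset.single_le_sum (f := fun n => (lam n)⁻¹ * (Y n t - X n t) ^ 2)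
    (fun n _ => mul_nonneg (inv_nonneg.2 (lam_nonneg n)) (sq_nonneg _))
    (Finset.mem_Icc.2 ⟨hm, hmN⟩)

end Energy

theorem inviscid_uniqueness_in_class_general
    (β T ε : ℝ) (hβ : 0 < β) (hε : 0 < ε)
    (X : ℕ → ℝ → ℝ) (hX : IsInviscidSolution β (Set.Icc 0 T) X)
    (hpos : ∀ n, 1 ≤ n → ∀ t ∈ Set.Icc (0 : ℝ) T, 0 ≤ X n t)
    (hbd : ∃ C : ℝ, ∀ t ∈ Set.Icc (0 : ℝ) T, ∀ n, 1 ≤ n →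
      lam n ^ ((β - 1) / 3 + ε) * X n t ≤ C) :
    ∀ Y : ℕ → ℝ → ℝ, IsInviscidSolution β (Set.Icc 0 T) Y →
      (∃ C : ℝ, ∀ t ∈ Set.Icc (0 : ℝ) T, ∀ n, 1 ≤ n →
        lam n ^ ((β - 1) / 3 + ε) * |Y n t| ≤ C) →
      (∀ n, 1 ≤ n → Y n 0 = X n 0) →
      ∀ n, 1 ≤ n → ∀ t ∈ Set.Icc (0 : ℝ) T, Y n t = X n t := by
  intro Y hY ⟨CY, hCY⟩ hY0 m hm t ht
  obtain ⟨CX, hCX⟩ := hbd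
  have hYnn := hY.nonneg fun n hn => hY0 n hn ▸ hpos n hn 0 ⟨le_rfl, ht.1.trans ht.2⟩
  set q : ℝ := 2 ^ ((β - 1) / 3 + ε)
  -- `ρ = 2 ^ (-3ε)`
  set ρ : ℝ := 2 ^ β / (2 * q ^ 3)
  have hq : 0 < q := by positivity
  have hρ0 : 0 ≤ ρ := div_nonneg (by positivity) (mul_pos two_pos (pow_pos hq 3)).le
  have hρ : ρ < 1 := by
    rw [div_lt_one (by positivity), ← Real.rpow_mul_natCast zero_le_two,
      ← Real.rpow_one_add' zero_le_two (ne_of_gt (by push_cast; linarith))]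
    exact Real.rpow_lt_rpow_of_exponent_lt one_lt_two (by push_cast; linarith)
  have hXq : ∀ s ∈ Icc 0 T, ∀ n, 1 ≤ n → q ^ n * X n s ≤ max CX CY := fun s hs n hn => by
    rw [← lam_rpow hn]
    exact (hCX s hs n hn).trans (le_max_left _ _)
  have hYq : ∀ s ∈ Icc 0 T, ∀ n, 1 ≤ n → q ^ n * Y n s ≤ max CX CY := fun s hs n hn => by
    rw [← lam_rpow hn]
    exact (mul_le_mul_of_nonneg_left (le_abs_self _) (Real.rpow_nonneg (lam_nonneg n) _)).trans
      ((hCY s hs n hn).trans (le_max_right _ _))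
  have hdecay : ∀ N ≥ m, (lam m)⁻¹ * (Y m t - X m t) ^ 2 ≤ 2 * max CX CY ^ 3 / q * ρ ^ N * t :=
    fun N hN => (inv_lam_mul_sq_le_diffEnergy X Y hm hN t).trans <| by
      simpa using diffEnergy_le hβ.ne' hX hY hpos hYnn hY0 (hm.trans hN)
        (fun s hs => neg_diffFlux_le hq (fun n hn => hpos n hn s hs)
          (fun n hn => hYnn n hn s hs) (hXq s hs) (hYq s hs) (hm.trans hN)) t ht
  have hlim : Tendsto (fun N => 2 * max CX CY ^ 3 / q * ρ ^ N * t) atTop (𝓝 0) := by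
    simpa using ((tendsto_pow_atTop_nhds_zero_of_lt_one hρ0 hρ).const_mul
      (2 * max CX CY ^ 3 / q)).mul_const t
  have hsq : (Y m t - X m t) ^ 2 ≤ 0 := nonpos_of_mul_nonpos_right
    (ge_of_tendsto hlim (eventually_atTop.2 ⟨m, hdecay⟩)) (by rw [lam_inv hm]; positivity)
  exact sub_eq_zero.1 (pow_eq_zero_iff two_ne_zero |>.1 (le_antisymm hsq (sq_nonneg _)))

/-- a positive weak solution of the inviscid dyadic model with
`sup_{t,n} λ_n^{(β-1)/3+ε} X_n(t) < ∞` is unique in the class of solutions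
satisfying the same bound. -/
theorem inviscid_uniqueness_in_class
    (β T ε : ℝ) (hβ : 0 < β) (hT : 0 < T) (hε : 0 < ε)
    (X : ℕ → ℝ → ℝ) (hX : IsInviscidSolution β (Set.Icc 0 T) X)
    (hpos : ∀ n, 1 ≤ n → ∀ t ∈ Set.Icc (0 : ℝ) T, 0 ≤ X n t)
    (hbd : ∃ C : ℝ, ∀ t ∈ Set.Icc (0 : ℝ) T, ∀ n, 1 ≤ n →
      lam n ^ ((β - 1) / 3 + ε) * X n t ≤ C) :
    ∀ Y : ℕ → ℝ → ℝ, IsInviscidSolution β (Set.Icc 0 T) Y →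
      (∃ C : ℝ, ∀ t ∈ Set.Icc (0 : ℝ) T, ∀ n, 1 ≤ n →
        lam n ^ ((β - 1) / 3 + ε) * |Y n t| ≤ C) →
      (∀ n, 1 ≤ n → Y n 0 = X n 0) →
      ∀ n, 1 ≤ n → ∀ t ∈ Set.Icc (0 : ℝ) T, Y n t = X n t :=
  inviscid_uniqueness_in_class_general β T ε hβ hε X hX hpos hbd
end
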